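/- For every k ∈ {0,…,T}, the Riccati solutions satisfy the Loewner-order bounds Π̂_k ⪰ Π_k ⪰ Π̌_k ⪰ 0, where Π is the Riccati solution associated with the covariances Σ_{ρ_0},…,Σ_{ρ_{T−1}}, Π̌ is the standard LQR Riccati solution, and Π̂_k = A_kᵀ ⋯ A_{T−1}ᵀ F A_{T−1} ⋯ A_k. -/

import Mathlib

open Matrix Filter Topology

/-- The unique symmetric positive semidefinite square root of a positive
semidefinite real matrix (junk value `0` if the matrix is not PSD). -/
noncomputable def msqrt {d : ℕ} (X : Matrix (Fin d) (Fin d) ℝ) :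
    Matrix (Fin d) (Fin d) ℝ :=
  letI := Classical.propDecidable X.PosSemidef
  if h : X.PosSemidef then
    h.1.eigenvectorUnitary.1 * diagonal ((↑) ∘ Real.sqrt ∘ h.1.eigenvalues) *
      (star h.1.eigenvectorUnitary : Matrix (Fin d) (Fin d) ℝ)
  else 0

/-- The Frobenius norm of a real square matrix. -/
noncomputable def frob {d : ℕ} (X : Matrix (Fin d) (Fin d) ℝ) : ℝ :=
  Real.sqrt (∑ i, ∑ j, X i j ^ 2)

/-- Data of the mutual information optimal control problem for a discrete-time
linear system `x_{k+1} = A_k x_k + B_k u_k + w_k`. -/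
structure LQData (n m : ℕ) where
  ε : ℝ
  A : ℕ → Matrix (Fin n) (Fin n) ℝ
  B : ℕ → Matrix (Fin n) (Fin m) ℝ
  R : ℕ → Matrix (Fin m) (Fin m) ℝ
  F : Matrix (Fin n) (Fin n) ℝ
  Sw : ℕ → Matrix (Fin n) (Fin n) ℝ
  Sini : Matrix (Fin n) (Fin n) ℝ

namespace LQData

variable {n m : ℕ} (P : LQData n m) (T : ℕ) (Srho : ℕ → Matrix (Fin m) (Fin m) ℝ)

/-- The backward Riccati recursion `Π_k` associated with the prior covariances
`Σ_{ρ_k}`: `Π_T = F` and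
`Π_k = A_kᵀ Π_{k+1} A_k − (1/ε) A_kᵀ Π_{k+1} B_k Σ^{1/2} (I + Σ^{1/2} C_k Σ^{1/2})⁻¹ Σ^{1/2} B_kᵀ Π_{k+1} A_k`
with `C_k = (R_k + B_kᵀ Π_{k+1} B_k)/ε`. -/
noncomputable def Ric (k : ℕ) : Matrix (Fin n) (Fin n) ℝ :=
  if h : T ≤ k then P.F
  else
    let Pk := Ric (k + 1)
    let S := msqrt (Srho k)
    let C := (1 / P.ε) • (P.R k + (P.B k)ᵀ * Pk * P.B k)
    (P.A k)ᵀ * Pk * P.A k -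
      (1 / P.ε) • ((P.A k)ᵀ * Pk * P.B k * S * (1 + S * C * S)⁻¹ * S * (P.B k)ᵀ * Pk * P.A k)
termination_by T - k
decreasing_by omega

/-- `C_k = (R_k + B_kᵀ Π_{k+1} B_k)/ε`. -/
noncomputable def Ck (k : ℕ) : Matrix (Fin m) (Fin m) ℝ :=
  (1 / P.ε) • (P.R k + (P.B k)ᵀ * P.Ric T Srho (k + 1) * P.B k)

/-- `Σ_{Q_k} = ε (R_k + B_kᵀ Π_{k+1} B_k)⁻¹`. -/
noncomputable def SigQ (k : ℕ) : Matrix (Fin m) (Fin m) ℝ :=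
  P.ε • (P.R k + (P.B k)ᵀ * P.Ric T Srho (k + 1) * P.B k)⁻¹

/-- Covariance `Σ_{π_k}` of the optimal policy for the fixed prior. -/
noncomputable def SigPi (k : ℕ) : Matrix (Fin m) (Fin m) ℝ :=
  msqrt (Srho k) * (1 + msqrt (Srho k) * P.Ck T Srho k * msqrt (Srho k))⁻¹ * msqrt (Srho k)

/-- Feedback gain `P_k = −(1/ε) Σ_{π_k} B_kᵀ Π_{k+1} A_k`. -/
noncomputable def Pgain (k : ℕ) : Matrix (Fin m) (Fin n) ℝ :=
  -((1 / P.ε) • (P.SigPi T Srho k * (P.B k)ᵀ * P.Ric T Srho (k + 1) * P.A k))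

/-- Forward state covariance recursion under the optimal policy. -/
noncomputable def Sigx : ℕ → Matrix (Fin n) (Fin n) ℝ
  | 0 => P.Sini
  | k + 1 =>
    (P.A k + P.B k * P.Pgain T Srho k) * Sigx k *
        (P.A k + P.B k * P.Pgain T Srho k)ᵀ +
      P.B k * P.SigPi T Srho k * (P.B k)ᵀ + P.Sw k

/-- The standard LQR Riccati recursion `Π̌_k`. -/
noncomputable def RicLQR (k : ℕ) : Matrix (Fin n) (Fin n) ℝ :=
  if h : T ≤ k then P.F
  else
    let Pk := RicLQR (k + 1)
    (P.A k)ᵀ * Pk * P.A k -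
      (P.A k)ᵀ * Pk * P.B k * (P.R k + (P.B k)ᵀ * Pk * P.B k)⁻¹ * (P.B k)ᵀ * Pk * P.A k
termination_by T - k
decreasing_by omega

/-- `Π̂_k = A_kᵀ ⋯ A_{T−1}ᵀ F A_{T−1} ⋯ A_k`. -/
noncomputable def RicHat (k : ℕ) : Matrix (Fin n) (Fin n) ℝ :=
  if h : T ≤ k then P.F
  else (P.A k)ᵀ * RicHat (k + 1) * P.A k
termination_by T - k
decreasing_by omega

/-- `Σ_{w_{k−1}}` with the convention `Σ_{w_{−1}} := Σ_{x_ini}`. -/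
noncomputable def Swm1 (k : ℕ) : Matrix (Fin n) (Fin n) ℝ :=
  if k = 0 then P.Sini else P.Sw (k - 1)

/-- The matrix `M̌_k` from the sufficient condition for stochastic optimal policies. -/
noncomputable def Mcheck (k : ℕ) : Matrix (Fin m) (Fin m) ℝ :=
  (P.R k + (P.B k)ᵀ * P.RicHat T (k + 1) * P.B k)⁻¹ *
      ((P.B k)ᵀ * P.RicLQR T (k + 1) * P.A k * P.Swm1 k * (P.A k)ᵀ *
        P.RicLQR T (k + 1) * P.B k) *
      (P.R k + (P.B k)ᵀ * P.RicHat T (k + 1) * P.B k)⁻¹ -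
    P.ε • (P.R k + (P.B k)ᵀ * P.RicLQR T (k + 1) * P.B k)⁻¹

/-- State covariance under the zero control input. -/
noncomputable def SigxZero : ℕ → Matrix (Fin n) (Fin n) ℝ
  | 0 => P.Sini
  | k + 1 => P.A k * SigxZero k * (P.A k)ᵀ + P.Sw k

/-- The matrix `M̂_k^zero` from the sufficient condition for deterministic optimal policies. -/
noncomputable def MhatZero (k : ℕ) : Matrix (Fin m) (Fin m) ℝ :=
  (P.R k + (P.B k)ᵀ * P.RicLQR T (k + 1) * P.B k)⁻¹ *
      ((P.B k)ᵀ * P.RicHat T (k + 1) * P.A k * P.SigxZero k * (P.A k)ᵀ *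
        P.RicHat T (k + 1) * P.B k) *
      (P.R k + (P.B k)ᵀ * P.RicLQR T (k + 1) * P.B k)⁻¹ -
    P.ε • (P.R k + (P.B k)ᵀ * P.RicHat T (k + 1) * P.B k)⁻¹


/-- The backward recursion `r_k` for the mean offset:
`r_T = 0` and `r_k = A_k⁻¹ r_{k+1} − Π_k⁻¹ A_kᵀ Π_{k+1} B_k (I + Σ_{ρ_k} C_k)⁻¹ μ_{ρ_k}`. -/
noncomputable def rvec (μ : ℕ → Fin m → ℝ) (k : ℕ) : Fin n → ℝ :=
  if h : T ≤ k then 0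
  else
    ((P.A k)⁻¹).mulVec (rvec μ (k + 1)) -
      ((P.Ric T Srho k)⁻¹ * ((P.A k)ᵀ * P.Ric T Srho (k + 1) * P.B k *
        (1 + Srho k * P.Ck T Srho k)⁻¹)).mulVec (μ k)
termination_by T - k
decreasing_by omega

/-- `Θ_k = ε C_k − ε C_k Σ_{π_k} C_k − (I − C_k Σ_{π_k}) B_kᵀ Π_{k+1} A_k Π_k⁻¹ A_kᵀ Π_{k+1} B_k (I − Σ_{π_k} C_k)`. -/
noncomputable def Theta (k : ℕ) : Matrix (Fin m) (Fin m) ℝ :=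
  P.ε • P.Ck T Srho k - P.ε • (P.Ck T Srho k * P.SigPi T Srho k * P.Ck T Srho k) -
    (1 - P.Ck T Srho k * P.SigPi T Srho k) *
      ((P.B k)ᵀ * P.Ric T Srho (k + 1) * P.A k * (P.Ric T Srho k)⁻¹ *
        ((P.A k)ᵀ * P.Ric T Srho (k + 1) * P.B k)) *
      (1 - P.SigPi T Srho k * P.Ck T Srho k)

end LQData

/-- Extend a `T`-tuple of matrices to a function on `ℕ` (by zero). -/
def extT {m : ℕ} (T : ℕ) (σ : Fin T → Matrix (Fin m) (Fin m) ℝ) :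
    ℕ → Matrix (Fin m) (Fin m) ℝ :=
  fun k => if h : k < T then σ ⟨k, h⟩ else 0


/-- Extend a `T`-tuple of vectors to a function on `ℕ` (by zero). -/
def extV {m : ℕ} (T : ℕ) (μ : Fin T → Fin m → ℝ) : ℕ → Fin m → ℝ :=
  fun k => if h : k < T then μ ⟨k, h⟩ else 0

namespace LQData

variable {n m : ℕ} (P : LQData n m) (T : ℕ)

/-- The reduced objective `J̌` as a function of the `T`-tuple of prior covariances. -/
noncomputable def Jcheck (σ : Fin T → Matrix (Fin m) (Fin m) ℝ) : ℝ :=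
  (1 / 2) * ((P.Ric T (extT T σ) 0 * P.Sini).trace +
    ∑ k : Fin T,
      (P.ε * Real.log ((extT T σ k + P.SigQ T (extT T σ) k).det / (P.SigQ T (extT T σ) k).det) +
        (P.Ric T (extT T σ) (k + 1) * P.Sw k).trace))

/-- `L_k = (Σ_{Q_k} + Σ_{ρ_k})⁻¹`. -/
noncomputable def Lmat (Srho : ℕ → Matrix (Fin m) (Fin m) ℝ) (k : ℕ) :
    Matrix (Fin m) (Fin m) ℝ :=
  (P.SigQ T Srho k + Srho k)⁻¹

/-- `E_k = (1/ε) Σ_{Q_k} B_kᵀ Π_{k+1} A_k`. -/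
noncomputable def Emat (Srho : ℕ → Matrix (Fin m) (Fin m) ℝ) (k : ℕ) :
    Matrix (Fin m) (Fin n) ℝ :=
  (1 / P.ε) • (P.SigQ T Srho k * (P.B k)ᵀ * P.Ric T Srho (k + 1) * P.A k)

/-- `J̌'_k = (ε/2) L_k (Σ_{ρ_k} + Σ_{Q_k} − E_k Σ_{x_k} E_kᵀ) L_k`. -/
noncomputable def Jprime (Srho : ℕ → Matrix (Fin m) (Fin m) ℝ) (k : ℕ) :
    Matrix (Fin m) (Fin m) ℝ :=
  (P.ε / 2) • (P.Lmat T Srho k *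
    (Srho k + P.SigQ T Srho k - P.Emat T Srho k * P.Sigx T Srho k * (P.Emat T Srho k)ᵀ) *
    P.Lmat T Srho k)

/-- The alternating-optimization update map `𝒯` on `T`-tuples of prior covariances:
`𝒯(σ)_k = Σ_{π_k} + P_k Σ_{x_k} P_kᵀ`. -/
noncomputable def Tmap (σ : Fin T → Matrix (Fin m) (Fin m) ℝ) :
    Fin T → Matrix (Fin m) (Fin m) ℝ :=
  fun k =>
    P.SigPi T (extT T σ) k +
      P.Pgain T (extT T σ) k * P.Sigx T (extT T σ) k * (P.Pgain T (extT T σ) k)ᵀ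

/-- The objective `J` as a function of the prior means, for fixed prior covariances:
`J(μ) = (1/2)( r_0ᵀ Π_0 r_0 + Σ_k μ_{ρ_k}ᵀ Θ_k μ_{ρ_k} )`. -/
noncomputable def Jmean (Srho : ℕ → Matrix (Fin m) (Fin m) ℝ) (μ : Fin T → Fin m → ℝ) : ℝ :=
  (1 / 2) *
    (P.rvec T Srho (extV T μ) 0 ⬝ᵥ (P.Ric T Srho 0).mulVec (P.rvec T Srho (extV T μ) 0) +
      ∑ k : Fin T, μ k ⬝ᵥ (P.Theta T Srho k).mulVec (μ k))

end LQData

open Matrix Filter Topology LQData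

/-!
Each of `Π̂`, `Π`, `Π̌` iterates a one-step map backwards, so the bounds follow by backward
induction from one-step facts for `R ≻ 0`, `ε > 0`, `Q ⪰ 0` and symmetric `S = Σ^{1/2}`. The
`Π`-step lies below `Aᵀ Q A`, since it subtracts a Gram matrix, and above the LQR step of `Q`,
since `S (1 + S C S)⁻¹ S ⪯ C⁻¹` for `C = (R + Bᵀ Q B)/ε ≻ 0`: by the Woodbury identity the
difference is the congruence `C⁻¹ (C⁻¹ + S S)⁻¹ C⁻¹`. Completing the square shows that the LQR
step is the least closed-loop cost `(A + B K)ᵀ Q (A + B K) + Kᵀ R K` over gains `K`; each such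
cost is nonnegative and monotone in `Q`, hence so is the LQR step.
-/

open scoped MatrixOrder

namespace Matrix

lemma PosSemidef.transpose_eq {ι : Type*} {Q : Matrix ι ι ℝ} (hQ : Q.PosSemidef) : Qᵀ = Q := by
  simpa using hQ.isHermitian.eq

variable {ι κ : Type*} [Fintype ι] [Fintype κ]

lemma transpose_mul_mul_nonneg {Q : Matrix ι ι ℝ} (hQ : 0 ≤ Q) (X : Matrix ι κ ℝ) :
    0 ≤ Xᵀ * Q * X := by
  simpa using (nonneg_iff_posSemidef.mp hQ).conjTranspose_mul_mul_same X |>.nonneg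

lemma transpose_mul_mul_le_transpose_mul_mul {Q₁ Q₂ : Matrix ι ι ℝ} (h : Q₁ ≤ Q₂)
    (X : Matrix ι κ ℝ) : Xᵀ * Q₁ * X ≤ Xᵀ * Q₂ * X := by
  rw [← sub_nonneg, ← Matrix.sub_mul, ← Matrix.mul_sub]
  exact transpose_mul_mul_nonneg (sub_nonneg.mpr h) X

lemma PosDef.add_transpose_mul_mul {R : Matrix κ κ ℝ} (hR : R.PosDef) {Q : Matrix ι ι ℝ}
    (hQ : 0 ≤ Q) (B : Matrix ι κ ℝ) : (R + Bᵀ * Q * B).PosDef :=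
  hR.add_posSemidef (transpose_mul_mul_nonneg hQ B).posSemidef

lemma mul_inv_one_add_mul_mul_le_inv [DecidableEq κ] {C S : Matrix κ κ ℝ} (hC : C.PosDef)
    (hS : Sᵀ = S) : S * (1 + S * C * S)⁻¹ * S ≤ C⁻¹ := by
  have hdet : IsUnit C.det := hC.det_pos.ne'.isUnit
  have hN : (1 + S * C * S).PosDef := by
    simpa only [hS] using PosDef.one.add_transpose_mul_mul hC.posSemidef.nonneg S
  have hW : (C⁻¹ + S * 1 * S).PosDef := by
    simpa only [hS] using hC.inv.add_transpose_mul_mul PosSemidef.one.nonneg S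
  have woodbury : (C⁻¹ + S * 1 * S)⁻¹ = C - C * S * (1 + S * C * S)⁻¹ * S * C := by
    rw [add_mul_mul_inv_eq_sub _ _ _ _ (isUnit_nonsing_inv_iff.mpr hC.isUnit) isUnit_one
      (by simpa [nonsing_inv_nonsing_inv C hdet] using hN.isUnit)]
    simp [nonsing_inv_nonsing_inv C hdet]
  have key : C⁻¹ - S * (1 + S * C * S)⁻¹ * S = (C⁻¹)ᵀ * (C⁻¹ + S * 1 * S)⁻¹ * C⁻¹ := by
    rw [woodbury, hC.inv.posSemidef.transpose_eq, Matrix.mul_sub, Matrix.sub_mul]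
    simp only [Matrix.mul_assoc, nonsing_inv_mul_cancel_left C _ hdet, mul_nonsing_inv _ hdet,
      Matrix.mul_one]
  rw [le_iff, key]
  exact (transpose_mul_mul_nonneg hW.inv.posSemidef.nonneg C⁻¹).posSemidef

end Matrix

section RiccatiStep

variable {ι κ : Type*} [Fintype ι] [Fintype κ]
  (A : Matrix ι ι ℝ) (B : Matrix ι κ ℝ) (R : Matrix κ κ ℝ)

def closedLoopCost (Q : Matrix ι ι ℝ) (K : Matrix κ ι ℝ) : Matrix ι ι ℝ :=
  (A + B * K)ᵀ * Q * (A + B * K) + Kᵀ * R * K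

variable [DecidableEq κ]

noncomputable def lqrRiccatiStep (Q : Matrix ι ι ℝ) : Matrix ι ι ℝ :=
  Aᵀ * Q * A - Aᵀ * Q * B * (R + Bᵀ * Q * B)⁻¹ * Bᵀ * Q * A

noncomputable def lqrGain (Q : Matrix ι ι ℝ) : Matrix κ ι ℝ :=
  -((R + Bᵀ * Q * B)⁻¹ * (Bᵀ * Q * A))

noncomputable def riccatiStep (ε : ℝ) (S : Matrix κ κ ℝ) (Q : Matrix ι ι ℝ) : Matrix ι ι ℝ :=
  Aᵀ * Q * A - (1 / ε) •
    (Aᵀ * Q * B * S * (1 + S * ((1 / ε) • (R + Bᵀ * Q * B)) * S)⁻¹ * S * Bᵀ * Q * A)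

variable {A B R} {Q : Matrix ι ι ℝ} {ε : ℝ} {S : Matrix κ κ ℝ}

lemma lqrRiccatiStep_eq (hQ : Qᵀ = Q) :
    lqrRiccatiStep A B R Q = Aᵀ * Q * A - (Bᵀ * Q * A)ᵀ * (R + Bᵀ * Q * B)⁻¹ * (Bᵀ * Q * A) := by
  simp only [lqrRiccatiStep, transpose_mul, transpose_transpose, hQ, Matrix.mul_assoc]

lemma riccatiStep_eq (hQ : Qᵀ = Q) :
    riccatiStep A B R ε S Q = Aᵀ * Q * A - (Bᵀ * Q * A)ᵀ *
      ((1 / ε) • (S * (1 + S * ((1 / ε) • (R + Bᵀ * Q * B)) * S)⁻¹ * S)) * (Bᵀ * Q * A) := by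
  simp only [riccatiStep, transpose_mul, transpose_transpose, hQ, Matrix.mul_assoc, Matrix.smul_mul,
    Matrix.mul_smul]

lemma closedLoopCost_eq (hQ : Qᵀ = Q) (hR : Rᵀ = R) (hM : IsUnit (R + Bᵀ * Q * B).det)
    (K : Matrix κ ι ℝ) :
    closedLoopCost A B R Q K = lqrRiccatiStep A B R Q +
      (K - lqrGain A B R Q)ᵀ * (R + Bᵀ * Q * B) * (K - lqrGain A B R Q) := by
  have hMt : (R + Bᵀ * Q * B)ᵀ = R + Bᵀ * Q * B := by
    simp only [transpose_add, transpose_mul, transpose_transpose, hQ, hR, Matrix.mul_assoc]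
  have hcost : closedLoopCost A B R Q K = Aᵀ * Q * A + (Bᵀ * Q * A)ᵀ * K + Kᵀ * (Bᵀ * Q * A) +
      Kᵀ * (R + Bᵀ * Q * B) * K := by
    simp only [closedLoopCost, transpose_add, transpose_mul, transpose_transpose, hQ,
      Matrix.add_mul, Matrix.mul_add, Matrix.mul_assoc]
    abel
  rw [hcost, lqrRiccatiStep_eq hQ, lqrGain, sub_neg_eq_add]
  set M := R + Bᵀ * Q * B
  set X := Bᵀ * Q * A
  simp only [transpose_add, transpose_mul, transpose_nonsing_inv, hMt, Matrix.add_mul,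
    Matrix.mul_add, Matrix.mul_assoc, mul_nonsing_inv_cancel_left _ _ hM,
    nonsing_inv_mul_cancel_left _ _ hM]
  abel

lemma lqrRiccatiStep_le_closedLoopCost (hR : R.PosDef) (hQ : 0 ≤ Q) (K : Matrix κ ι ℝ) :
    lqrRiccatiStep A B R Q ≤ closedLoopCost A B R Q K := by
  have hM := hR.add_transpose_mul_mul hQ B
  rw [closedLoopCost_eq hQ.posSemidef.transpose_eq hR.posSemidef.transpose_eq
    hM.det_pos.ne'.isUnit K]
  exact le_add_of_nonneg_right (transpose_mul_mul_nonneg hM.posSemidef.nonneg _)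

lemma lqrRiccatiStep_eq_closedLoopCost_lqrGain (hR : R.PosDef) (hQ : 0 ≤ Q) :
    lqrRiccatiStep A B R Q = closedLoopCost A B R Q (lqrGain A B R Q) := by
  rw [closedLoopCost_eq hQ.posSemidef.transpose_eq hR.posSemidef.transpose_eq
    (hR.add_transpose_mul_mul hQ B).det_pos.ne'.isUnit, sub_self]
  simp

lemma lqrRiccatiStep_nonneg (hR : R.PosDef) (hQ : 0 ≤ Q) : 0 ≤ lqrRiccatiStep A B R Q := by
  rw [lqrRiccatiStep_eq_closedLoopCost_lqrGain hR hQ]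
  exact add_nonneg (transpose_mul_mul_nonneg hQ _) (transpose_mul_mul_nonneg hR.posSemidef.nonneg _)

lemma lqrRiccatiStep_mono (hR : R.PosDef) {Q₁ Q₂ : Matrix ι ι ℝ} (hQ₁ : 0 ≤ Q₁) (h : Q₁ ≤ Q₂) :
    lqrRiccatiStep A B R Q₁ ≤ lqrRiccatiStep A B R Q₂ :=
  calc lqrRiccatiStep A B R Q₁ ≤ closedLoopCost A B R Q₁ (lqrGain A B R Q₂) :=
        lqrRiccatiStep_le_closedLoopCost hR hQ₁ _
    _ ≤ closedLoopCost A B R Q₂ (lqrGain A B R Q₂) := by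
        unfold closedLoopCost
        exact add_le_add_left (transpose_mul_mul_le_transpose_mul_mul h _) _
    _ = lqrRiccatiStep A B R Q₂ := (lqrRiccatiStep_eq_closedLoopCost_lqrGain hR (hQ₁.trans h)).symm

lemma riccatiStep_le (hε : 0 < ε) (hR : R.PosDef) (hQ : 0 ≤ Q) (hS : Sᵀ = S) :
    riccatiStep A B R ε S Q ≤ Aᵀ * Q * A := by
  have hC : ((1 / ε) • (R + Bᵀ * Q * B)).PosDef :=
    (hR.add_transpose_mul_mul hQ B).smul (by positivity)
  have hN : (1 + S * ((1 / ε) • (R + Bᵀ * Q * B)) * S).PosDef := by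
    simpa only [hS] using PosDef.one.add_transpose_mul_mul hC.posSemidef.nonneg S
  rw [riccatiStep_eq hQ.posSemidef.transpose_eq]
  refine sub_le_self _ (transpose_mul_mul_nonneg (smul_nonneg (by positivity) ?_) _)
  simpa only [hS] using transpose_mul_mul_nonneg hN.inv.posSemidef.nonneg S

lemma lqrRiccatiStep_le_riccatiStep (hε : 0 < ε) (hR : R.PosDef) (hQ : 0 ≤ Q) (hS : Sᵀ = S) :
    lqrRiccatiStep A B R Q ≤ riccatiStep A B R ε S Q := by
  have hM := hR.add_transpose_mul_mul hQ B
  have hC_inv : ((1 / ε) • (R + Bᵀ * Q * B))⁻¹ = ε • (R + Bᵀ * Q * B)⁻¹ :=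
    inv_eq_left_inv (by
      rw [Matrix.smul_mul, Matrix.mul_smul, nonsing_inv_mul _ hM.det_pos.ne'.isUnit, smul_smul,
        mul_one_div_cancel hε.ne', one_smul])
  have hW := mul_inv_one_add_mul_mul_le_inv (hM.smul (one_div_pos.mpr hε)) hS
  rw [hC_inv] at hW
  rw [riccatiStep_eq hQ.posSemidef.transpose_eq, lqrRiccatiStep_eq hQ.posSemidef.transpose_eq]
  refine sub_le_sub_left (transpose_mul_mul_le_transpose_mul_mul ?_ _) _
  calc (1 / ε) • (S * (1 + S * ((1 / ε) • (R + Bᵀ * Q * B)) * S)⁻¹ * S)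
      ≤ (1 / ε) • (ε • (R + Bᵀ * Q * B)⁻¹) := smul_le_smul_of_nonneg_left hW (by positivity)
    _ = (R + Bᵀ * Q * B)⁻¹ := by rw [smul_smul, one_div_mul_cancel hε.ne', one_smul]

end RiccatiStep

lemma msqrt_posSemidef {d : ℕ} (X : Matrix (Fin d) (Fin d) ℝ) : (msqrt X).PosSemidef := by
  unfold msqrt
  split
  · rw [star_eq_conjTranspose]
    exact (PosSemidef.diagonal fun i ↦ by simp [Real.sqrt_nonneg]).mul_mul_conjTranspose_same _
  · exact PosSemidef.zero

namespace LQData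

variable {n m : ℕ} (P : LQData n m) (T : ℕ) (Srho : ℕ → Matrix (Fin m) (Fin m) ℝ) {k : ℕ}

lemma Ric_of_le (hk : T ≤ k) : P.Ric T Srho k = P.F := by
  rw [Ric, dif_pos hk]

lemma Ric_of_lt (hk : k < T) :
    P.Ric T Srho k =
      riccatiStep (P.A k) (P.B k) (P.R k) P.ε (msqrt (Srho k)) (P.Ric T Srho (k + 1)) := by
  rw [Ric, dif_neg hk.not_ge]
  rfl

lemma RicLQR_of_le (hk : T ≤ k) : P.RicLQR T k = P.F := by
  rw [RicLQR, dif_pos hk]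

lemma RicLQR_of_lt (hk : k < T) :
    P.RicLQR T k = lqrRiccatiStep (P.A k) (P.B k) (P.R k) (P.RicLQR T (k + 1)) := by
  rw [RicLQR, dif_neg hk.not_ge]
  rfl

lemma RicHat_of_le (hk : T ≤ k) : P.RicHat T k = P.F := by
  rw [RicHat, dif_pos hk]

lemma RicHat_of_lt (hk : k < T) : P.RicHat T k = (P.A k)ᵀ * P.RicHat T (k + 1) * P.A k := by
  rw [RicHat, dif_neg hk.not_ge]

end LQData

theorem riccati_loewner_bounds_general {n m : ℕ} (T : ℕ)
    (P : LQData n m) (hε : 0 < P.ε)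
    (hR : ∀ k < T, (P.R k).PosDef)
    (hF : P.F.PosDef)
    (Srho : ℕ → Matrix (Fin m) (Fin m) ℝ) :
    ∀ k ≤ T, (P.RicHat T k - P.Ric T Srho k).PosSemidef ∧
      (P.Ric T Srho k - P.RicLQR T k).PosSemidef ∧
      (P.RicLQR T k).PosSemidef := by
  intro k hk
  induction hk using Nat.decreasingInduction with
  | self =>
    rw [P.RicHat_of_le T le_rfl, P.Ric_of_le T Srho le_rfl, P.RicLQR_of_le T le_rfl, sub_self]
    exact ⟨PosSemidef.zero, PosSemidef.zero, hF.posSemidef⟩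
  | of_succ k hk ih =>
    obtain ⟨hHat, hLQR, hLQR_nonneg⟩ := ih
    have hRic_nonneg := hLQR_nonneg.nonneg.trans hLQR
    have hS := (msqrt_posSemidef (Srho k)).transpose_eq
    rw [P.RicHat_of_lt T hk, P.Ric_of_lt T Srho hk, P.RicLQR_of_lt T hk]
    exact ⟨(riccatiStep_le hε (hR k hk) hRic_nonneg hS).trans
        (transpose_mul_mul_le_transpose_mul_mul hHat _),
      (lqrRiccatiStep_mono (hR k hk) hLQR_nonneg.nonneg hLQR).trans
        (lqrRiccatiStep_le_riccatiStep hε (hR k hk) hRic_nonneg hS),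
      (lqrRiccatiStep_nonneg (hR k hk) hLQR_nonneg.nonneg).posSemidef⟩

theorem riccati_loewner_bounds {n m : ℕ} (hn : 1 ≤ n) (hm : 1 ≤ m) (T : ℕ) (hT : 1 ≤ T)
    (P : LQData n m) (hε : 0 < P.ε)
    (hR : ∀ k < T, (P.R k).PosDef) (hSw : ∀ k < T, (P.Sw k).PosDef)
    (hF : P.F.PosDef) (hSini : P.Sini.PosDef)
    (Srho : ℕ → Matrix (Fin m) (Fin m) ℝ) (hSrho : ∀ k < T, (Srho k).PosSemidef) :
    ∀ k ≤ T, (P.RicHat T k - P.Ric T Srho k).PosSemidef ∧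
      (P.Ric T Srho k - P.RicLQR T k).PosSemidef ∧
      (P.RicLQR T k).PosSemidef :=
  riccati_loewner_bounds_general T P hε hR hF Srho
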